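/- Fix a cache size k, a universe U, and an initial linear order π on U. Let r and r' be two request sequences of the same length over U, and let q and q' be their rank encodings (with respect to π). If q_t ≥ q'_t for every t, then Opt(r) ≥ Opt(r'). -/

import Mathlib

/-!
Paging: the optimal offline cost is monotone under pointwise domination of rank
encodings.
-/

namespace Paging

variable {V : Type*} [DecidableEq V]

/-- `S` is a schedule for `s` with cache size `k`: same length, each cache has at most `k`
items and contains the corresponding request. -/
def IsSchedule (k : ℕ) (s : List V) (S : List (Finset V)) : Prop :=
  S.length = s.length ∧ ∀ p ∈ s.zip S, p.1 ∈ p.2 ∧ p.2.card ≤ k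

/-- The cost of a schedule: the total number of evictions (an item is evicted at time `t`
if it is in `S_{t-1}` but not in `S_t`). -/
def schedCost (S : List (Finset V)) : ℕ :=
  ((S.zip S.tail).map fun p => (p.1 \ p.2).card).sum

/-- The optimal (offline) cost of serving `s` with cache size `k`. -/
noncomputable def optCost (k : ℕ) (s : List V) : ℕ :=
  sInf (schedCost '' {S | IsSchedule k s S})

/-- The distinct items requested in `s`, in order of decreasing recency of last request. -/
def recents (s : List ℕ) : List ℕ := s.dedup.reverse

/-- The rank of item `x` after the request sequence `s`, with respect to the initial
order given by the injection `π`: the items requested in `s` come first, ordered by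
decreasing recency of their last request; the unrequested items follow, ordered by `π`.
Ranks are 1-indexed. -/
noncomputable def rank (π : ℕ → ℕ) (s : List ℕ) (x : ℕ) : ℕ :=
  if x ∈ recents s then (recents s).idxOf x + 1
  else (recents s).length + 1 + Set.ncard {y | y ∉ s ∧ π y < π x}

/-- The rank encoding of `r`: its `t`-th entry is the rank of `r_t` after the prefix
`r_1 … r_{t-1}`. -/
noncomputable def rankEnc (π : ℕ → ℕ) (r : List ℕ) : List ℕ :=
  (List.range r.length).map fun t => rank π (r.take t) (r.getD t 0)


section Aux

variable {π : ℕ → ℕ}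

lemma mem_recents {z : ℕ} {s : List ℕ} : z ∈ recents s ↔ z ∈ s := by
  simp [recents, List.mem_dedup]

lemma nodup_recents (s : List ℕ) : (recents s).Nodup := by
  simpa [recents] using (List.nodup_dedup s)

lemma dedup_snoc (h : List ℕ) (w : ℕ) :
    (h ++ [w]).dedup = (h.dedup.filter (· ≠ w)) ++ [w] := by
  induction h with
  | nil => simp
  | cons a h ih =>
      by_cases haw : a = w
      · subst haw
        rw [List.cons_append, List.dedup_cons_of_mem (by simp), ih]
        by_cases hah : a ∈ h
        · rw [List.dedup_cons_of_mem hah]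
        · rw [List.dedup_cons_of_notMem hah]
          simp
      · by_cases hah : a ∈ h
        · rw [List.cons_append, List.dedup_cons_of_mem (by simp [hah]), ih,
            List.dedup_cons_of_mem hah]
        · rw [List.cons_append, List.dedup_cons_of_notMem (by simp [hah, haw]), ih,
            List.dedup_cons_of_notMem hah]
          simp [haw]

lemma recents_snoc (h : List ℕ) (w : ℕ) :
    recents (h ++ [w]) = w :: (recents h).filter (· ≠ w) := by
  rw [recents, dedup_snoc, List.reverse_append]
  simp [recents, List.filter_reverse]

lemma idxOf_filter_ne {L : List ℕ} (hL : L.Nodup) {z w : ℕ} (hz : z ∈ L) (hzw : z ≠ w) :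
    (L.filter (· ≠ w)).idxOf z =
      if w ∈ L ∧ L.idxOf w < L.idxOf z then L.idxOf z - 1 else L.idxOf z := by
  induction L with
  | nil => simp at hz
  | cons a L ih =>
      rcases List.nodup_cons.1 hL with ⟨haL, hLn⟩
      by_cases haz : a = z
      · subst haz
        rw [List.filter_cons_of_pos (by simpa using hzw)]
        simp [List.idxOf_cons_self]
      · have hzL : z ∈ L := by
          rcases List.mem_cons.1 hz with h | h
          · exact absurd h.symm haz
          · exact h
        have hidz : List.idxOf z (a :: L) = List.idxOf z L + 1 :=
          List.idxOf_cons_ne _ haz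
        by_cases haw : a = w
        · subst haw
          rw [List.filter_cons_of_neg (by simp)]
          rw [ih hLn hzL, if_neg (fun ⟨h1, _⟩ => haL h1), if_pos]
          · omega
          · exact ⟨by simp, by rw [hidz, List.idxOf_cons_self]; omega⟩
        · rw [List.filter_cons_of_pos (by simpa using haw)]
          have hidza : List.idxOf z (a :: List.filter (fun x => decide (x ≠ w)) L)
              = List.idxOf z (List.filter (fun x => decide (x ≠ w)) L) + 1 :=
            List.idxOf_cons_ne _ haz
          rw [hidza, ih hLn hzL, hidz]
          by_cases hwL : w ∈ L
          · have hidw : List.idxOf w (a :: L) = List.idxOf w L + 1 :=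
              List.idxOf_cons_ne _ haw
            by_cases hcond : L.idxOf w < L.idxOf z
            · rw [if_pos ⟨hwL, hcond⟩, if_pos ⟨by simp [hwL], by omega⟩]
              omega
            · rw [if_neg (fun ⟨_, h2⟩ => hcond h2), if_neg]
              intro ⟨h1, h2⟩
              rw [hidw] at h2
              exact hcond (by omega)
          · rw [if_neg (fun ⟨h1,_⟩ => hwL h1), if_neg]
            intro ⟨h1, h2⟩
            rcases List.mem_cons.1 h1 with h | h
            · exact haw h.symm
            · exact hwL h

/-- The set counted in the fresh branch of `rank` is finite. -/
lemma cnt_finite (hπ : Function.Injective π) (s : List ℕ) (x : ℕ) : {y | y ∉ s ∧ π y < π x}.Finite := by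
  apply Set.Finite.subset (Set.Finite.preimage (Set.injOn_of_injective hπ) (Set.finite_Iio (π x)))
  intro y hy
  exact hy.2

lemma rank_of_mem {s : List ℕ} {z : ℕ} (hz : z ∈ s) :
    rank π s z = (recents s).idxOf z + 1 := if_pos (mem_recents.2 hz)

lemma rank_of_not_mem {s : List ℕ} {z : ℕ} (hz : z ∉ s) :
    rank π s z = (recents s).length + 1 + Set.ncard {y | y ∉ s ∧ π y < π z} :=
  if_neg (fun h => hz (mem_recents.1 h))

lemma rank_pos (s : List ℕ) (z : ℕ) : 1 ≤ rank π s z := by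
  unfold rank; split <;> omega

lemma rank_le_of_mem {s : List ℕ} {z : ℕ} (hz : z ∈ s) :
    rank π s z ≤ (recents s).length := by
  rw [rank_of_mem hz]
  have := List.idxOf_lt_length_iff.2 (mem_recents.2 hz)
  omega

lemma rank_gt_of_not_mem {s : List ℕ} {z : ℕ} (hz : z ∉ s) :
    (recents s).length < rank π s z := by
  rw [rank_of_not_mem hz]; omega

lemma cnt_lt_cnt (hπ : Function.Injective π) {s : List ℕ} {x₁ x₂ : ℕ} (h1 : x₁ ∉ s) (hlt : π x₁ < π x₂) :
    Set.ncard {y | y ∉ s ∧ π y < π x₁} < Set.ncard {y | y ∉ s ∧ π y < π x₂} := by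
  apply Set.ncard_lt_ncard _ (cnt_finite hπ s x₂)
  constructor
  · intro y hy
    exact ⟨hy.1, lt_trans hy.2 hlt⟩
  · intro hsub
    have : x₁ ∈ {y | y ∉ s ∧ π y < π x₂} := ⟨h1, hlt⟩
    have h2 := hsub this
    exact lt_irrefl _ h2.2

lemma rank_injective (hπ : Function.Injective π) (s : List ℕ) : Function.Injective (rank π s) := by
  intro z₁ z₂ heq
  by_cases h1 : z₁ ∈ s <;> by_cases h2 : z₂ ∈ s
  · rw [rank_of_mem h1, rank_of_mem h2] at heq
    exact (List.idxOf_inj (mem_recents.2 h1)).1 (by omega)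
  · have := rank_le_of_mem (π := π) h1
    have := rank_gt_of_not_mem (π := π) h2
    omega
  · have := rank_le_of_mem (π := π) h2
    have := rank_gt_of_not_mem (π := π) h1
    omega
  · rw [rank_of_not_mem h1, rank_of_not_mem h2] at heq
    by_contra hne
    rcases lt_trichotomy (π z₁) (π z₂) with h | h | h
    · have := cnt_lt_cnt hπ h1 h
      omega
    · exact hne (hπ h)
    · have := cnt_lt_cnt hπ h2 h
      omega

lemma filter_ne_of_not_mem {L : List ℕ} {w : ℕ} (hw : w ∉ L) :
    L.filter (· ≠ w) = L := by
  apply List.filter_eq_self.2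
  intro a ha
  simp only [decide_eq_true_eq]
  exact fun h => hw (h ▸ ha)

lemma length_filter_ne_of_mem {L : List ℕ} (hL : L.Nodup) {w : ℕ} (hw : w ∈ L) :
    (L.filter (· ≠ w)).length = L.length - 1 := by
  have : L.filter (· ≠ w) = L.erase w := by
    rw [hL.erase_eq_filter]
    congr 1
    funext x
    by_cases h : x = w <;> simp [h]
  rw [this, List.length_erase_of_mem hw]

/-- Core evolution lemma : how ranks change when one request is appended. -/
lemma rank_snoc (hπ : Function.Injective π) (h : List ℕ) (w z : ℕ) :
    rank π (h ++ [w]) z =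
      if z = w then 1
      else if rank π h z < rank π h w then rank π h z + 1 else rank π h z := by
  have hrs := recents_snoc h w
  by_cases hzw : z = w
  · subst hzw
    rw [if_pos rfl, rank_of_mem (by simp), hrs, List.idxOf_cons_self]
  · rw [if_neg hzw]
    by_cases hz : z ∈ h
    · -- z was requested before
      rw [rank_of_mem (by simp [hz]), hrs]
      have hidx : List.idxOf z (w :: (recents h).filter (· ≠ w))
          = List.idxOf z ((recents h).filter (· ≠ w)) + 1 :=
        List.idxOf_cons_ne _ (fun hh => hzw hh.symm)
      rw [hidx, idxOf_filter_ne (nodup_recents h) (mem_recents.2 hz) hzw]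
      rw [rank_of_mem hz]
      by_cases hw : w ∈ h
      · rw [rank_of_mem hw]
        have hne : (recents h).idxOf w ≠ (recents h).idxOf z := by
          intro hh
          exact hzw ((List.idxOf_inj (mem_recents.2 hw)).1 hh).symm
        by_cases hlt : (recents h).idxOf w < (recents h).idxOf z
        · rw [if_pos ⟨mem_recents.2 hw, hlt⟩, if_neg (by omega)]
          omega
        · rw [if_neg (fun hc => hlt hc.2), if_pos (by omega)]
      · have h1 := rank_le_of_mem (π := π) hz
        have h2 := rank_gt_of_not_mem (π := π) hw
        rw [rank_of_mem hz] at h1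
        rw [if_neg (fun hc => hw (mem_recents.1 hc.1)),
          if_pos (show List.idxOf z (recents h) + 1 < rank π h w by omega)]
    · -- z is fresh
      have hz' : z ∉ h ++ [w] := by simp [hz, hzw]
      rw [rank_of_not_mem hz', hrs]
      have hset : {y | y ∉ h ++ [w] ∧ π y < π z} = {y | y ∉ h ∧ π y < π z} \ {w} := by
        ext y
        simp only [Set.mem_setOf_eq, Set.mem_diff, Set.mem_singleton_iff, List.mem_append,
          List.mem_singleton]
        tauto
      rw [hset]
      by_cases hw : w ∈ h
      · have hlen := length_filter_ne_of_mem (nodup_recents h) (mem_recents.2 hw)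
        have hm : 1 ≤ (recents h).length := List.length_pos_of_mem (mem_recents.2 hw)
        have hwns : w ∉ {y | y ∉ h ∧ π y < π z} := fun hc => hc.1 hw
        rw [Set.diff_singleton_eq_self hwns, rank_of_not_mem hz]
        have hle := rank_le_of_mem (π := π) hw
        have hgt := rank_gt_of_not_mem (π := π) hz
        rw [if_neg (by omega)]
        simp only [List.length_cons, hlen]
        omega
      · have hlen : ((recents h).filter (· ≠ w)).length = (recents h).length := by
          rw [filter_ne_of_not_mem (fun hc => hw (mem_recents.1 hc))]
        have hπne : π z ≠ π w := fun hc => hzw (hπ hc)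
        rw [rank_of_not_mem hz]
        rcases lt_or_gt_of_ne hπne with hlt | hgt
        · -- π z < π w : fresh pair, z before w : rank goes up by one
          have hcnt := cnt_lt_cnt hπ (s := h) hz hlt
          have hwns : w ∉ {y | y ∉ h ∧ π y < π z} := fun hc => lt_asymm hc.2 hlt
          rw [Set.diff_singleton_eq_self hwns]
          rw [if_pos (by rw [rank_of_not_mem hw]; omega)]
          simp only [List.length_cons, hlen]
          omega
        · -- π w < π z : w slots in below z, rank unchanged
          have hcnt := cnt_lt_cnt hπ (s := h) hw hgt
          have hwm : w ∈ {y | y ∉ h ∧ π y < π z} := ⟨hw, hgt⟩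
          rw [Set.ncard_diff_singleton_of_mem hwm]
          have hpos : 0 < Set.ncard {y | y ∉ h ∧ π y < π z} :=
            (Set.ncard_pos (cnt_finite hπ h z)).2 ⟨w, hwm⟩
          rw [if_neg (by rw [rank_of_not_mem hw]; omega)]
          simp only [List.length_cons, hlen]
          omega

/-- Existence of an item of the next-smaller rank. -/
lemma rank_pred (hπ : Function.Injective π) {h : List ℕ} {x : ℕ} (h2 : 2 ≤ rank π h x) :
    ∃ y, rank π h y + 1 = rank π h x := by
  by_cases hx : x ∈ h
  · have hxm := mem_recents.2 hx
    have hidx : 1 ≤ (recents h).idxOf x := by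
      rw [rank_of_mem hx] at h2; omega
    have hlt : (recents h).idxOf x - 1 < (recents h).length := by
      have := List.idxOf_lt_length_iff.2 hxm
      omega
    refine ⟨(recents h).get ⟨(recents h).idxOf x - 1, hlt⟩, ?_⟩
    have hymem : (recents h).get ⟨(recents h).idxOf x - 1, hlt⟩ ∈ recents h := List.get_mem _ _
    rw [rank_of_mem (mem_recents.1 hymem), rank_of_mem hx]
    have : (recents h).idxOf ((recents h).get ⟨(recents h).idxOf x - 1, hlt⟩)
        = (recents h).idxOf x - 1 := (nodup_recents h).idxOf_getElem _ _
    omega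
  · rw [rank_of_not_mem hx] at h2 ⊢
    by_cases hc : Set.ncard {y | y ∉ h ∧ π y < π x} = 0
    · -- take the least recent requested item
      rw [hc] at h2 ⊢
      have hm : 1 ≤ (recents h).length := by omega
      have hlt : (recents h).length - 1 < (recents h).length := by omega
      refine ⟨(recents h).get ⟨(recents h).length - 1, hlt⟩, ?_⟩
      have hymem : (recents h).get ⟨(recents h).length - 1, hlt⟩ ∈ recents h := List.get_mem _ _
      rw [rank_of_mem (mem_recents.1 hymem)]
      have : (recents h).idxOf ((recents h).get ⟨(recents h).length - 1, hlt⟩)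
          = (recents h).length - 1 := (nodup_recents h).idxOf_getElem _ _
      omega
    · -- take the π-largest unrequested item below x
      have hfin := cnt_finite hπ h x
      have hne : {y | y ∉ h ∧ π y < π x}.Nonempty := Set.nonempty_of_ncard_ne_zero hc
      obtain ⟨y, hyS, hymax⟩ := Set.Finite.exists_maximalFor π _ hfin hne
      refine ⟨y, ?_⟩
      rw [rank_of_not_mem hyS.1]
      have hset : {v | v ∉ h ∧ π v < π y} = {v | v ∉ h ∧ π v < π x} \ {y} := by
        ext v
        simp only [Set.mem_setOf_eq, Set.mem_diff, Set.mem_singleton_iff]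
        constructor
        · intro ⟨h1, h2'⟩
          exact ⟨⟨h1, lt_trans h2' hyS.2⟩, fun hvy => by subst hvy; exact lt_irrefl _ h2'⟩
        · intro ⟨⟨h1, h2'⟩, hvy⟩
          refine ⟨h1, ?_⟩
          rcases lt_or_ge (π v) (π y) with hh | hh
          · exact hh
          · exact absurd (le_antisymm hh (hymax ⟨h1, h2'⟩ hh)).symm (fun he => hvy (hπ he))
      rw [hset, Set.ncard_diff_singleton_of_mem hyS]
      have hpos : 0 < Set.ncard {y | y ∉ h ∧ π y < π x} := Nat.pos_of_ne_zero hc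
      omega

/-- Anything requested strictly after the last occurrence of `v` has smaller rank. -/
lemma rank_lt_of_later (hπ : Function.Injective π) (A B : List ℕ) (v : ℕ) (hvB : v ∉ B) :
    ∀ w ∈ B, rank π (A ++ v :: B) w < rank π (A ++ v :: B) v := by
  induction B using List.reverseRecOn with
  | nil => intro w hw; simp at hw
  | append_singleton B₀ c ih =>
      intro w hw
      have hvB₀ : v ∉ B₀ := fun hc => hvB (by simp [hc])
      have hvc : v ≠ c := fun hc => hvB (by simp [hc])
      have hres : A ++ v :: (B₀ ++ [c]) = (A ++ v :: B₀) ++ [c] := by simp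
      rw [hres, rank_snoc hπ, rank_snoc hπ, if_neg hvc]
      by_cases hwc : w = c
      · rw [if_pos hwc]
        have h1 := rank_pos (π := π) (A ++ v :: B₀) v
        by_cases hlt : rank π (A ++ v :: B₀) v < rank π (A ++ v :: B₀) c
        · rw [if_pos hlt]; omega
        · rw [if_neg hlt]
          rcases Nat.lt_or_ge 1 (rank π (A ++ v :: B₀) v) with h | h
          · omega
          · -- rank v = 1 = rank c is impossible since v ≠ c... need rank v ≠ rank c
            have : rank π (A ++ v :: B₀) v = 1 := by omega
            have hvc' : rank π (A ++ v :: B₀) c ≥ 1 := rank_pos _ _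
            have : rank π (A ++ v :: B₀) v < rank π (A ++ v :: B₀) c ∨
                rank π (A ++ v :: B₀) v = rank π (A ++ v :: B₀) c ∨
                rank π (A ++ v :: B₀) c < rank π (A ++ v :: B₀) v := by omega
            rcases this with h' | h' | h'
            · exact absurd h' hlt
            · exact absurd (rank_injective hπ _ h') hvc
            · omega
      · rw [if_neg hwc]
        have hwB₀ : w ∈ B₀ := by
          rcases List.mem_append.1 hw with h | h
          · exact h
          · simp at h; exact absurd h hwc
        have hIH := ih hvB₀ w hwB₀
        have hvc'' : rank π (A ++ v :: B₀) v ≠ rank π (A ++ v :: B₀) c :=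
          fun h' => hvc (rank_injective hπ _ h')
        have hwc'' : rank π (A ++ v :: B₀) w ≠ rank π (A ++ v :: B₀) c :=
          fun h' => hwc (rank_injective hπ _ h')
        split <;> split <;> omega

lemma rankEnc_getD {r : List ℕ} {t : ℕ} (ht : t < r.length) :
    (rankEnc π r).getD t 0 = rank π (r.take t) (r.getD t 0) := by
  rw [rankEnc, List.getD_eq_getElem _ _ (by simpa using ht)]
  simp

lemma eq_of_rank_eq (hπ : Function.Injective π) {u v : List ℕ} (hlen : u.length = v.length)
    (henc : ∀ t < u.length,
      rank π (u.take t) (u.getD t 0) = rank π (v.take t) (v.getD t 0)) : u = v := by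
  have key : ∀ t ≤ u.length, u.take t = v.take t := by
    intro t
    induction t with
    | zero => intro _; simp
    | succ t iht =>
        intro hts
        have ht : t < u.length := by omega
        have hpre := iht (le_of_lt ht)
        have hto : u.getD t 0 = v.getD t 0 := by
          have := henc t ht
          rw [hpre] at this
          exact rank_injective hπ _ this
        have h1 : u.take (t+1) = u.take t ++ [u.getD t 0] := by
          rw [List.getD_eq_getElem _ _ ht, ← List.concat_eq_append]
          exact (List.take_concat_get ht).symm
        have h2 : v.take (t+1) = v.take t ++ [v.getD t 0] := by
          rw [List.getD_eq_getElem _ _ (hlen ▸ ht), ← List.concat_eq_append]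
          exact (List.take_concat_get (hlen ▸ ht)).symm
        rw [h1, h2, hpre, hto]
  have := key u.length (le_refl _)
  rwa [List.take_length, hlen, List.take_length] at this

/-- Swapping two rank-adjacent items: ranks in the two worlds correspond. -/
lemma rank_swap (hπ : Function.Injective π) {p : List ℕ} {x y : ℕ} (hxy : x ≠ y)
    (ha : rank π p y + 1 = rank π p x) (s : List ℕ) (z : ℕ) :
    rank π (p ++ x :: s) z
      = rank π (p ++ y :: (s.map (Equiv.swap x y))) (Equiv.swap x y z) := by
  induction s using List.reverseRecOn generalizing z with
  | nil =>
      have h1 : p ++ x :: ([] : List ℕ) = p ++ [x] := rfl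
      have h2 : p ++ y :: (List.map (Equiv.swap x y) []) = p ++ [y] := rfl
      rw [h1, h2, rank_snoc hπ, rank_snoc hπ]
      by_cases hzx : z = x
      · subst hzx
        rw [if_pos rfl, Equiv.swap_apply_left, if_pos rfl]
      · rw [if_neg hzx]
        by_cases hzy : z = y
        · subst hzy
          rw [Equiv.swap_apply_right, if_neg hxy, if_pos (by omega), if_neg (by omega)]
          omega
        · rw [Equiv.swap_apply_of_ne_of_ne hzx hzy, if_neg hzy]
          have hne : rank π p z ≠ rank π p y := fun h => hzy (rank_injective hπ _ h)
          by_cases hlt : rank π p z < rank π p y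
          · rw [if_pos (by omega), if_pos hlt]
          · rw [if_neg (by omega), if_neg hlt]
  | append_singleton s c ih =>
      have h1 : p ++ x :: (s ++ [c]) = (p ++ x :: s) ++ [c] := by simp
      have h2 : p ++ y :: ((s ++ [c]).map (Equiv.swap x y))
          = (p ++ y :: s.map (Equiv.swap x y)) ++ [Equiv.swap x y c] := by simp
      rw [h1, h2, rank_snoc hπ, rank_snoc hπ, ← ih, ← ih]
      have hiff : z = c ↔ Equiv.swap x y z = Equiv.swap x y c := (Equiv.apply_eq_iff_eq _).symm
      by_cases hzc : z = c
      · rw [if_pos hzc, if_pos (hiff.1 hzc)]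
      · rw [if_neg hzc, if_neg (fun h => hzc (hiff.2 h))]

lemma isSchedule_iff {k : ℕ} {s : List ℕ} {S : List (Finset ℕ)} :
    IsSchedule k s S ↔ S.length = s.length ∧
      ∀ i < s.length, s.getD i (0:ℕ) ∈ S.getD i ∅ ∧ (S.getD i ∅).card ≤ k := by
  constructor
  · rintro ⟨hlen, hmem⟩
    refine ⟨hlen, fun i hi => ?_⟩
    have hi' : i < (s.zip S).length := by rw [List.length_zip]; omega
    have hz := hmem (s.zip S)[i] (List.mem_iff_getElem.2 ⟨i, hi', rfl⟩)
    rw [List.getElem_zip] at hz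
    rwa [List.getD_eq_getElem s (0:ℕ) hi, List.getD_eq_getElem S ∅ (by omega)]
  · rintro ⟨hlen, hmem⟩
    refine ⟨hlen, fun q hq => ?_⟩
    obtain ⟨i, hi, hqe⟩ := List.mem_iff_getElem.1 hq
    have hi' : i < s.length := by rw [List.length_zip] at hi; omega
    have := hmem i hi'
    rw [List.getD_eq_getElem s (0:ℕ) hi', List.getD_eq_getElem S ∅ (by omega)] at this
    rw [← hqe, List.getElem_zip]
    exact this

lemma schedCost_eq_sum (S : List (Finset ℕ)) :
    schedCost S = ∑ i ∈ Finset.range (S.length - 1),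
      ((S.getD i ∅) \ (S.getD (i+1) ∅)).card := by
  induction S with
  | nil => simp [schedCost]
  | cons C S ih =>
      cases S with
      | nil => simp [schedCost]
      | cons D S' =>
          have step : schedCost (C :: D :: S') = (C \ D).card + schedCost (D :: S') := by
            simp [schedCost]
          rw [step, ih]
          have hlen : (C :: D :: S').length - 1 = ((D :: S').length - 1) + 1 := by
            simp
          rw [hlen, Finset.sum_range_succ']
          simp [List.getD_cons_succ]
          ring

lemma trivial_schedule {k : ℕ} (hk : 1 ≤ k) (s : List ℕ) :
    IsSchedule k s (s.map fun a => ({a} : Finset ℕ)) := by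
  rw [isSchedule_iff]
  constructor
  · simp
  · intro i hi
    have : (List.map (fun a => ({a} : Finset ℕ)) s).getD i ∅ = {s.getD i (0:ℕ)} := by
      rw [List.getD_eq_getElem _ _ (by simpa using hi), List.getElem_map,
        List.getD_eq_getElem _ _ hi]
    rw [this]
    simp [hk]

lemma optCost_le_schedCost {k : ℕ} {s : List ℕ} {S : List (Finset ℕ)}
    (hS : IsSchedule k s S) : optCost k s ≤ schedCost S :=
  Nat.sInf_le ⟨S, hS, rfl⟩

lemma optCost_le_optCost {k : ℕ} (hk : 1 ≤ k) {u u' : List ℕ}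
    (h : ∀ S, IsSchedule k u S → ∃ S', IsSchedule k u' S' ∧ schedCost S' ≤ schedCost S) :
    optCost k u' ≤ optCost k u := by
  have hne : (schedCost '' {S | IsSchedule k u S}).Nonempty :=
    ⟨_, ⟨_, trivial_schedule hk u, rfl⟩⟩
  obtain ⟨S, hS, hcost⟩ := Nat.sInf_mem hne
  obtain ⟨S', hS', hle⟩ := h S hS
  calc optCost k u' ≤ schedCost S' := optCost_le_schedCost hS'
    _ ≤ schedCost S := hle
    _ = optCost k u := hcost

lemma getD_append_cons (a : List ℕ) (b : ℕ) (l : List ℕ) (i : ℕ) :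
    (a ++ b :: l).getD i 0 =
      if i < a.length then a.getD i 0
      else if i = a.length then b else l.getD (i - a.length - 1) 0 := by
  by_cases h1 : i < a.length
  · rw [if_pos h1, List.getD_append _ _ _ _ h1]
  · rw [if_neg h1]
    rw [List.getD_append_right _ _ _ _ (by omega)]
    by_cases h2 : i = a.length
    · rw [if_pos h2, h2]
      simp
    · rw [if_neg h2]
      have : i - a.length = (i - a.length - 1) + 1 := by omega
      rw [this, List.getD_cons_succ]
      simp only [Nat.add_sub_cancel]

lemma getD_map_lt {α β : Type*} (f : α → β) (s : List α) (d : β) (d' : α) {j : ℕ}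
    (hj : j < s.length) : (s.map f).getD j d = f (s.getD j d') := by
  rw [List.getD_eq_getElem _ _ (by simpa using hj), List.getD_eq_getElem _ _ hj,
    List.getElem_map]

lemma getD_cut (g : Finset ℕ → Finset ℕ) (hg : g ∅ = ∅) (S : List (Finset ℕ)) (c i : ℕ)
    (hc : c ≤ S.length) :
    (S.take c ++ (S.drop c).map g).getD i ∅ =
      if i < c then S.getD i ∅ else g (S.getD i ∅) := by
  have hlen : (S.take c).length = c := by simp [hc]
  by_cases h1 : i < c
  · rw [if_pos h1, List.getD_append _ _ _ _ (by omega)]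
    rw [List.getD_eq_getElem _ _ (by omega), List.getD_eq_getElem _ _ (by omega)]
    simp [List.getElem_take]
  · rw [if_neg h1, List.getD_append_right _ _ _ _ (by omega), hlen]
    by_cases h2 : i < S.length
    · rw [getD_map_lt _ _ _ ∅ (by simp; omega), List.getD_eq_getElem _ _ (by simp; omega),
        List.getD_eq_getElem _ _ h2]
      congr 1
      rw [List.getElem_drop]
      congr 1
      omega
    · rw [List.getD_eq_default _ _ (by simp; omega), List.getD_eq_default _ _ (by omega), hg]

lemma sdiff_image_swap_card_le {x y : ℕ} (hxy : x ≠ y) {A B : Finset ℕ}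
    (h1 : x ∈ A → y ∈ A) (h2 : y ∈ B → x ∈ B) :
    (A \ B.image (Equiv.swap x y)).card ≤ (A \ B).card := by
  classical
  apply Finset.card_le_card_of_injOn (fun z => if z = x ∧ x ∈ B then y else z)
  · intro z hz
    simp only [Finset.mem_coe] at hz ⊢
    rw [Finset.mem_sdiff] at hz
    obtain ⟨hzA, hzB⟩ := hz
    by_cases hcase : z = x ∧ x ∈ B
    · rw [if_pos hcase, Finset.mem_sdiff]
      refine ⟨h1 (hcase.1 ▸ hzA), fun hyB => ?_⟩
      apply hzB
      have h3 := Finset.mem_image_of_mem (⇑(Equiv.swap x y)) hyB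
      rw [Equiv.swap_apply_right] at h3
      rw [hcase.1]
      exact h3
    · rw [if_neg hcase, Finset.mem_sdiff]
      refine ⟨hzA, fun hzB' => ?_⟩
      apply hzB
      by_cases hzx : z = x
      · exact absurd ⟨hzx, hzx ▸ hzB'⟩ hcase
      · by_cases hzy : z = y
        · have hxB : x ∈ B := h2 (hzy ▸ hzB')
          have h3 := Finset.mem_image_of_mem (⇑(Equiv.swap x y)) hxB
          rw [Equiv.swap_apply_left] at h3
          rw [hzy]
          exact h3
        · have h3 := Finset.mem_image_of_mem (⇑(Equiv.swap x y)) hzB'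
          rwa [Equiv.swap_apply_of_ne_of_ne hzx hzy] at h3
  · intro z1 hz1 z2 hz2 heq
    simp only [Finset.coe_sdiff, Set.mem_diff, Finset.mem_coe] at hz1 hz2
    dsimp only at heq
    by_cases hc1 : z1 = x ∧ x ∈ B <;> by_cases hc2 : z2 = x ∧ x ∈ B
    · rw [hc1.1, hc2.1]
    · rw [if_pos hc1, if_neg hc2] at heq
      exfalso
      apply hz2.2
      rw [← heq]
      have h3 := Finset.mem_image_of_mem (⇑(Equiv.swap x y)) hc1.2
      rwa [Equiv.swap_apply_left] at h3
    · rw [if_neg hc1, if_pos hc2] at heq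
      exfalso
      apply hz1.2
      rw [heq]
      have h3 := Finset.mem_image_of_mem (⇑(Equiv.swap x y)) hc2.2
      rwa [Equiv.swap_apply_left] at h3
    · rwa [if_neg hc1, if_neg hc2] at heq

lemma image_swap_sdiff_card (σ : ℕ ≃ ℕ) (A B : Finset ℕ) :
    (A.image σ \ B.image σ).card = (A \ B).card := by
  rw [← Finset.image_sdiff _ _ σ.injective, Finset.card_image_of_injective _ σ.injective]

lemma swap_schedule_of_cut {k : ℕ} {p s : List ℕ} {x y : ℕ} (hxy : x ≠ y)
    {S : List (Finset ℕ)} (hS : IsSchedule k (p ++ x :: s) S)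
    (c : ℕ) (hcT : c ≤ p.length)
    (hwin : ∀ i, c ≤ i → i < p.length → p.getD i 0 ≠ x ∧ p.getD i 0 ≠ y)
    (hbA : 1 ≤ c → (x ∈ S.getD (c-1) ∅ → y ∈ S.getD (c-1) ∅))
    (hbB : 1 ≤ c → (y ∈ S.getD c ∅ → x ∈ S.getD c ∅)) :
    ∃ S', IsSchedule k (p ++ y :: s.map (Equiv.swap x y)) S' ∧ schedCost S' ≤ schedCost S := by
  classical
  set σe := Equiv.swap x y with hσe
  set g : Finset ℕ → Finset ℕ := Finset.image ⇑σe with hgdef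
  have hg0 : g ∅ = ∅ := Finset.image_empty _
  obtain ⟨hSlen, hval⟩ := isSchedule_iff.1 hS
  have hulen : (p ++ x :: s).length = p.length + (s.length + 1) := by simp
  have hu'len : (p ++ y :: s.map σe).length = p.length + (s.length + 1) := by simp
  have hcS : c ≤ S.length := by omega
  have hgetS' := fun i => getD_cut g hg0 S c i hcS
  have hgetu := fun i => getD_append_cons p x s i
  have hgetu' := fun i => getD_append_cons p y (s.map σe) i
  refine ⟨S.take c ++ (S.drop c).map g, ?_, ?_⟩
  · rw [isSchedule_iff]
    constructor
    · simp [hSlen]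
      omega
    · intro i hi
      rw [hu'len] at hi
      have hival := hval i (by omega)
      rw [hgetu i] at hival
      constructor
      · -- membership
        rw [hgetS' i, hgetu' i]
        by_cases h1 : i < c
        · rw [if_pos h1, if_pos (by omega)]
          rw [if_pos (by omega)] at hival
          exact hival.1
        · rw [if_neg h1]
          by_cases h2 : i < p.length
          · rw [if_pos h2]
            rw [if_pos h2] at hival
            have hne := hwin i (by omega) h2
            have : σe (p.getD i 0) = p.getD i 0 := Equiv.swap_apply_of_ne_of_ne hne.1 hne.2
            exact this ▸ Finset.mem_image_of_mem _ hival.1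
          · rw [if_neg h2]
            by_cases h3 : i = p.length
            · rw [if_pos h3]
              rw [if_neg h2, if_pos h3] at hival
              have : σe x = y := Equiv.swap_apply_left x y
              exact this ▸ Finset.mem_image_of_mem _ hival.1
            · rw [if_neg h3]
              rw [if_neg h2, if_neg h3] at hival
              rw [getD_map_lt _ _ _ 0 (by omega)]
              exact Finset.mem_image_of_mem _ hival.1
      · -- card
        rw [hgetS' i]
        by_cases h1 : i < c
        · rw [if_pos h1]; exact hival.2
        · rw [if_neg h1]
          exact le_trans Finset.card_image_le hival.2
  · -- cost
    rw [schedCost_eq_sum, schedCost_eq_sum]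
    have hlen' : (S.take c ++ (S.drop c).map g).length = S.length := by
      simp
      omega
    rw [hlen']
    apply Finset.sum_le_sum
    intro i _
    rw [hgetS' i, hgetS' (i+1)]
    rcases Nat.lt_trichotomy (i+1) c with h1 | h1 | h1
    · rw [if_pos (by omega), if_pos (by omega)]
    · rw [if_pos (by omega), if_neg (by omega)]
      exact sdiff_image_swap_card_le hxy
        (by have := hbA (by omega); rwa [show c - 1 = i by omega] at this)
        (by have := hbB (by omega); rwa [← h1] at this)
    · rw [if_neg (by omega), if_neg (by omega)]
      rw [image_swap_sdiff_card]

lemma exists_last_occ {y : ℕ} {p : List ℕ} (hy : y ∈ p) :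
    ∃ A B, p = A ++ y :: B ∧ y ∉ B := by
  induction p using List.reverseRecOn with
  | nil => simp at hy
  | append_singleton p₀ c ih =>
      by_cases hyc : y = c
      · exact ⟨p₀, [], by rw [hyc], by simp⟩
      · have hy₀ : y ∈ p₀ := by
          rcases List.mem_append.1 hy with h | h
          · exact h
          · simp at h; exact absurd h hyc
        obtain ⟨A, B₀, hp, hyB⟩ := ih hy₀
        exact ⟨A, B₀ ++ [c], by rw [hp]; simp, by simp [hyB, hyc]⟩

lemma getD_mem {l : List ℕ} {i : ℕ} (hi : i < l.length) : l.getD i 0 ∈ l := by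
  rw [List.getD_eq_getElem _ _ hi]
  exact List.getElem_mem hi

/-- The optimal cost does not increase when one request is replaced by the
item of next-smaller rank (and the suffix is relabelled by the transposition). -/
lemma opt_decrement {k : ℕ} (hk : 1 ≤ k) (hπ : Function.Injective π) {p s : List ℕ} {x y : ℕ}
    (hxy : x ≠ y) (hrk : rank π p y + 1 = rank π p x) :
    optCost k (p ++ y :: s.map (Equiv.swap x y)) ≤ optCost k (p ++ x :: s) := by
  classical
  apply optCost_le_optCost hk
  intro S hS
  obtain ⟨hSlen, hval⟩ := isSchedule_iff.1 hS
  have hulen : (p ++ x :: s).length = p.length + (s.length + 1) := by simp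
  have hvalT : x ∈ S.getD p.length ∅ := by
    have := (hval p.length (by omega)).1
    rwa [getD_append_cons, if_neg (by omega), if_pos rfl] at this
  by_cases hyp : y ∈ p
  · obtain ⟨A, B, hp, hyB⟩ := exists_last_occ hyp
    have hxB : x ∉ B := by
      intro hxB
      have := rank_lt_of_later hπ A B y hyB x hxB
      rw [← hp] at this
      omega
    set j := A.length with hj
    have hjlen : j < p.length := by rw [hp, List.length_append, List.length_cons]; omega
    have hyj : (p ++ x :: s).getD j 0 = y := by
      rw [getD_append_cons, if_pos hjlen, hp, getD_append_cons, if_neg (by omega), if_pos rfl]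
    have hySj : y ∈ S.getD j ∅ := by
      have := (hval j (by omega)).1
      rwa [hyj] at this
    have hwin : ∀ i, j < i → i < p.length → p.getD i 0 ≠ x ∧ p.getD i 0 ≠ y := by
      intro i hji hip
      have hBlen : i - j - 1 < B.length := by
        rw [hp] at hip; simp at hip; omega
      have : p.getD i 0 = B.getD (i - j - 1) 0 := by
        rw [hp, getD_append_cons, if_neg (by omega), if_neg (by omega)]
      rw [this]
      have hmem := getD_mem hBlen
      exact ⟨fun h => hxB (h ▸ hmem), fun h => hyB (h ▸ hmem)⟩
    set D := (Finset.range (p.length + 1)).filter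
      (fun i => j < i ∧ x ∈ S.getD i ∅ ∧ y ∉ S.getD i ∅) with hD
    by_cases hDne : D.Nonempty
    · obtain ⟨c, hcD, hcmin⟩ := Finset.exists_min_image D id hDne
      have hcmem := hcD
      rw [hD, Finset.mem_filter, Finset.mem_range] at hcmem
      obtain ⟨hcr, ⟨hjc, hxc, hyc⟩⟩ := hcmem
      apply swap_schedule_of_cut hxy hS c (by omega)
      · intro i hci hip
        exact hwin i (by omega) hip
      · intro _ hxc1
        by_cases hcj : c - 1 = j
        · rwa [hcj]
        · by_contra hyc1
          have hmem : c - 1 ∈ D := by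
            rw [hD, Finset.mem_filter, Finset.mem_range]
            exact ⟨by omega, by omega, hxc1, hyc1⟩
          have := hcmin _ hmem
          simp only [id] at this
          omega
      · intro _ hyc'
        exact absurd hyc' hyc
    · apply swap_schedule_of_cut hxy hS p.length (le_refl _)
      · intro i h1 h2; omega
      · intro _ hx1
        by_cases hcj : p.length - 1 = j
        · rwa [hcj]
        · by_contra hy1
          exact hDne ⟨p.length - 1, by
            rw [hD, Finset.mem_filter, Finset.mem_range]
            exact ⟨by omega, by omega, hx1, hy1⟩⟩
      · intro _ _
        exact hvalT
  · have hxp : x ∉ p := by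
      intro hxp
      have h1 := rank_le_of_mem (π := π) hxp
      have h2 := rank_gt_of_not_mem (π := π) hyp
      omega
    apply swap_schedule_of_cut hxy hS 0 (by omega)
    · intro i h0 hip
      have hmem := getD_mem hip
      exact ⟨fun h => hxp (h ▸ hmem), fun h => hyp (h ▸ hmem)⟩
    · intro h; omega
    · intro h; omega

/-- Encoding of the swapped sequence: same, except decremented at `T`. -/
lemma enc_decrement (hπ : Function.Injective π) {u : List ℕ} {T : ℕ} (hT : T < u.length)
    {y : ℕ} (hxy : u.getD T 0 ≠ y)
    (hrk : rank π (u.take T) y + 1 = rank π (u.take T) (u.getD T 0)) :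
    ∀ t < u.length,
      (rankEnc π (u.take T ++ y :: (u.drop (T+1)).map (Equiv.swap (u.getD T 0) y))).getD t 0
        = if t = T then rank π (u.take T) (u.getD T 0) - 1
          else (rankEnc π u).getD t 0 := by
  set x := u.getD T 0 with hx
  set p := u.take T with hpdef
  set s := u.drop (T+1) with hsdef
  have hplen : p.length = T := by
    rw [hpdef, List.length_take]
    omega
  have hdecomp : u = p ++ x :: s := by
    rw [hpdef, hsdef, hx]
    conv_lhs => rw [← List.take_append_drop T u]
    congr 1
    rw [List.getD_eq_getElem _ _ hT]
    exact List.drop_eq_getElem_cons hT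
  have hslen : s.length = u.length - T - 1 := by
    rw [hsdef, List.length_drop]
    omega
  have hu'len : (p ++ y :: s.map (Equiv.swap x y)).length = u.length := by
    simp only [List.length_append, List.length_cons, List.length_map]
    omega
  intro t ht
  have henc' := rankEnc_getD (π := π) (r := p ++ y :: s.map (Equiv.swap x y)) (t := t)
    (by omega)
  have henc := rankEnc_getD (π := π) (r := u) (t := t) ht
  rcases Nat.lt_trichotomy t T with h1 | h1 | h1
  · -- before T : everything identical
    rw [if_neg (by omega), henc, henc']
    have htake : (p ++ y :: s.map (Equiv.swap x y)).take t = u.take t := by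
      rw [List.take_append_of_le_length (by omega), hpdef, List.take_take,
        min_eq_left (by omega)]
    have hgd : (p ++ y :: s.map (Equiv.swap x y)).getD t 0 = u.getD t 0 := by
      rw [getD_append_cons, if_pos (by omega), hpdef]
      rw [List.getD_eq_getElem _ _ (by rw [List.length_take]; omega),
        List.getD_eq_getElem _ _ ht]
      simp [List.getElem_take]
    rw [htake, hgd]
  · -- at T
    subst h1
    rw [if_pos rfl, henc']
    have htake : (p ++ y :: s.map (Equiv.swap x y)).take t = p := by
      rw [← hplen, List.take_left]
    have hgd : (p ++ y :: s.map (Equiv.swap x y)).getD t 0 = y := by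
      rw [getD_append_cons, if_neg (by omega), if_pos (by omega)]
    rw [htake, hgd]
    omega
  · -- after T : ranks correspond under the swap
    rw [if_neg (by omega), henc, henc']
    set j := t - T - 1 with hj
    have hjs : j < s.length := by omega
    have htakeu : u.take t = p ++ x :: s.take j := by
      conv_lhs => rw [hdecomp]
      have : t = p.length + (j + 1) := by omega
      rw [this, List.take_append]
      simp
    have htakeu' : (p ++ y :: s.map (Equiv.swap x y)).take t
        = p ++ y :: (s.take j).map (Equiv.swap x y) := by
      have : t = p.length + (j + 1) := by omega
      rw [this, List.take_append]
      simp
    have hgdu : u.getD t 0 = s.getD j 0 := by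
      conv_lhs => rw [hdecomp]
      rw [getD_append_cons, if_neg (by omega), if_neg (by omega), hplen]
    have hgdu' : (p ++ y :: s.map (Equiv.swap x y)).getD t 0
        = Equiv.swap x y (s.getD j 0) := by
      rw [getD_append_cons, if_neg (by omega), if_neg (by omega), hplen,
        getD_map_lt _ _ _ 0 (by omega)]
    rw [htakeu, htakeu', hgdu, hgdu']
    exact (rank_swap hπ hxy hrk (s.take j) (s.getD j 0)).symm

end Aux

/-- if `r` and `r'` have equal lengths and the rank encoding of `r`
dominates that of `r'` pointwise, then `Opt(r) ≥ Opt(r')`. -/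
theorem opt_monotone_in_ranks (k : ℕ) (hk : 1 ≤ k) (π : ℕ → ℕ)
    (hπ : Function.Injective π) (r r' : List ℕ) (hlen : r.length = r'.length)
    (hdom : ∀ t < r.length, (rankEnc π r').getD t 0 ≤ (rankEnc π r).getD t 0) :
    optCost k r' ≤ optCost k r := by
  suffices H : ∀ N (u : List ℕ), u.length = r'.length →
      (∀ t < u.length, (rankEnc π r').getD t 0 ≤ (rankEnc π u).getD t 0) →
      (∑ t ∈ Finset.range u.length,
        ((rankEnc π u).getD t 0 - (rankEnc π r').getD t 0)) = N →
      optCost k r' ≤ optCost k u by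
    exact H _ r hlen hdom rfl
  intro N
  induction N using Nat.strong_induction_on with
  | _ N ih =>
    intro u hulen hudom hmeas
    by_cases hall : ∀ t < u.length,
        (rankEnc π u).getD t 0 = (rankEnc π r').getD t 0
    · have : u = r' := by
        apply eq_of_rank_eq hπ hulen
        intro t ht
        rw [← rankEnc_getD ht, ← rankEnc_getD (by omega : t < r'.length)]
        exact hall t ht
      rw [this]
    · push_neg at hall
      obtain ⟨T, hT, hne⟩ := hall
      have hlt : (rankEnc π r').getD T 0 < (rankEnc π u).getD T 0 :=
        lt_of_le_of_ne (hudom T hT) (fun h => hne h.symm)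
      have hq1 : 1 ≤ (rankEnc π r').getD T 0 := by
        rw [rankEnc_getD (by omega : T < r'.length)]
        exact rank_pos _ _
      have ha2 : 2 ≤ rank π (u.take T) (u.getD T 0) := by
        rw [← rankEnc_getD hT]
        omega
      obtain ⟨y, hy⟩ := rank_pred hπ ha2
      have hxy : u.getD T 0 ≠ y := by
        intro he
        rw [he] at hy
        omega
      set u' := u.take T ++ y :: (u.drop (T+1)).map (Equiv.swap (u.getD T 0) y) with hu'
      have hu'len : u'.length = u.length := by
        rw [hu']
        simp only [List.length_append, List.length_cons, List.length_map,
          List.length_take, List.length_drop]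
        omega
      have henc' := enc_decrement hπ hT hxy hy
      have hencT : (rankEnc π u).getD T 0 = rank π (u.take T) (u.getD T 0) :=
        rankEnc_getD hT
      -- new domination
      have hdom' : ∀ t < u'.length, (rankEnc π r').getD t 0 ≤ (rankEnc π u').getD t 0 := by
        intro t ht
        rw [hu'len] at ht
        rw [henc' t ht]
        by_cases htT : t = T
        · rw [if_pos htT, htT]
          omega
        · rw [if_neg htT]
          exact hudom t ht
      -- measure decreases
      have hmeas' : (∑ t ∈ Finset.range u'.length,
          ((rankEnc π u').getD t 0 - (rankEnc π r').getD t 0)) = N - 1 ∧ 1 ≤ N := by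
        rw [hu'len]
        have hTmem : T ∈ Finset.range u.length := Finset.mem_range.2 hT
        have hsplit := Finset.sum_eq_sum_sdiff_singleton_add hTmem
          (fun t => (rankEnc π u).getD t 0 - (rankEnc π r').getD t 0)
        have hsplit' := Finset.sum_eq_sum_sdiff_singleton_add hTmem
          (fun t => (rankEnc π u').getD t 0 - (rankEnc π r').getD t 0)
        have hcongr : ∑ t ∈ Finset.range u.length \ {T},
            ((rankEnc π u').getD t 0 - (rankEnc π r').getD t 0)
            = ∑ t ∈ Finset.range u.length \ {T},
            ((rankEnc π u).getD t 0 - (rankEnc π r').getD t 0) := by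
          apply Finset.sum_congr rfl
          intro t htmem
          rw [Finset.mem_sdiff, Finset.mem_range, Finset.mem_singleton] at htmem
          rw [henc' t htmem.1, if_neg htmem.2]
        have hTval : (rankEnc π u').getD T 0
            = (rankEnc π u).getD T 0 - 1 := by
          rw [henc' T hT, if_pos rfl, hencT]
        rw [hsplit'] at *
        rw [hsplit] at hmeas
        rw [hcongr, hTval]
        omega
      have hIH := ih (N - 1) (by omega) u' (by omega) hdom' hmeas'.1
      -- optCost comparison
      have hopt : optCost k u' ≤ optCost k u := by
        have hdecomp : u = u.take T ++ u.getD T 0 :: u.drop (T+1) := by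
          conv_lhs => rw [← List.take_append_drop T u]
          congr 1
          rw [List.getD_eq_getElem _ _ hT]
          exact List.drop_eq_getElem_cons hT
        calc optCost k u' ≤ optCost k (u.take T ++ u.getD T 0 :: u.drop (T+1)) :=
              opt_decrement hk hπ hxy hy
          _ = optCost k u := by rw [← hdecomp]
      exact le_trans hIH hopt

end Paging
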